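/- Let G be a soluble group and v a multilinear commutator word such that every v-value in G has finite order. Then the verbal subgroup v(G) is locally finite. -/

import Mathlib

/-- Shapes of multilinear commutator words. -/
inductive CommTree : Type
  | leaf : CommTree
  | node : CommTree → CommTree → CommTree

/-- The weight of a multilinear commutator word. -/
def CommTree.weight : CommTree → ℕ
  | .leaf => 1
  | .node a b => a.weight + b.weight

/-- Evaluation of a multilinear commutator word, using [a,b] = a⁻¹b⁻¹ab. -/
def CommTree.eval {G : Type*} [Group G] : CommTree → (ℕ → G) → G
  | .leaf, f => f 0
  | .node a b, f =>
      (a.eval f)⁻¹ * (b.eval fun n => f (n + a.weight))⁻¹ *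
        a.eval f * b.eval fun n => f (n + a.weight)

/-!
Induction on the derived length. Let `A` be the last nontrivial term of the derived series and
`T` its torsion part, so that `A / T` is torsion-free in `G / T`. A Hall–Witt argument along the
structure of `v` puts `[x, a]`, for a `v`-value `x` and `a ∈ A`, into the subgroup generated by
the `v`-values lying in `A`; modulo `T` these values are trivial, so every `v`-value centralizes
`A / T`. Given finitely many `v`-values generating `K`, the image of `K` in `G / A` is finite by
induction, hence the image of `K` in `G / T` has a centre of finite index; being generated by
torsion elements it is torsion (the transfer into the centre is `g ↦ g ^ index`), hence finite.
Finally `K ∩ T` is a finitely generated abelian torsion subgroup of finite index in `K`.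
-/

open Subgroup

section GroupTheory

open scoped IsMulCommutative

variable {G Q : Type*} [Group G] [Group Q]

theorem exists_finite_subset_of_mem_closure {S : Set G} {x : G} (hx : x ∈ closure S) :
    ∃ Y ⊆ S, Y.Finite ∧ x ∈ closure Y := by
  induction hx using closure_induction with
  | mem y hy =>
    exact ⟨{y}, Set.singleton_subset_iff.2 hy, Set.finite_singleton y, subset_closure rfl⟩
  | one => exact ⟨∅, Set.empty_subset _, Set.finite_empty, one_mem _⟩
  | mul y z _ _ hy hz =>
    obtain ⟨Y₁, hY₁S, hY₁, hy⟩ := hy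
    obtain ⟨Y₂, hY₂S, hY₂, hz⟩ := hz
    exact ⟨Y₁ ∪ Y₂, Set.union_subset hY₁S hY₂S, hY₁.union hY₂,
      mul_mem (closure_mono Set.subset_union_left hy) (closure_mono Set.subset_union_right hz)⟩
  | inv y _ hy =>
    obtain ⟨Y, hYS, hY, hy⟩ := hy
    exact ⟨Y, hYS, hY, inv_mem hy⟩

theorem exists_finite_subset_of_fg_le_closure {S : Set G} {H : Subgroup G} (hH : H.FG)
    (hle : H ≤ closure S) : ∃ Y ⊆ S, Y.Finite ∧ H ≤ closure Y := by
  obtain ⟨s, rfl⟩ := hH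
  choose Y hYS hY hxY using fun x : (s : Set G) =>
    exists_finite_subset_of_mem_closure (hle (subset_closure x.2))
  exact ⟨⋃ x, Y x, Set.iUnion_subset hYS, Set.finite_iUnion hY,
    (closure_le _).2 fun x hx => closure_mono (Set.subset_iUnion Y ⟨x, hx⟩) (hxY ⟨x, hx⟩)⟩

theorem normal_closure_of_conj_mem {s : Set G} (hs : ∀ x ∈ s, ∀ g : G, g * x * g⁻¹ ∈ s) :
    (closure s).Normal := by
  have : Group.conjugatesOfSet s = s := by
    refine Set.Subset.antisymm (fun x hx => ?_) Group.subset_conjugatesOfSet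
    obtain ⟨a, ha, hax⟩ := Group.mem_conjugatesOfSet_iff.1 hx
    obtain ⟨c, rfl⟩ := isConj_iff.1 hax
    exact hs a ha c
  rw [← this]
  exact normalClosure_normal

theorem isOfFinOrder_of_finiteIndex_center [(center G).FiniteIndex] {X : Set G}
    (hX : closure X = ⊤) (hXfin : ∀ x ∈ X, IsOfFinOrder x) (g : G) : IsOfFinOrder g := by
  let τ := MonoidHom.transferCenterPow G
  have hτ : (⊤ : Subgroup G).map τ ≤ CommGroup.torsion (center G) := by
    rw [← hX, MonoidHom.map_closure, closure_le]
    rintro _ ⟨x, hx, rfl⟩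
    exact τ.isOfFinOrder (hXfin x hx)
  have hg : IsOfFinOrder ((τ g : center G) : G) :=
    (center G).subtype_injective.isOfFinOrder_iff.2 (hτ ⟨g, mem_top g, rfl⟩)
  rw [MonoidHom.transferCenterPow_apply] at hg
  exact hg.of_pow FiniteIndex.index_ne_zero

theorem finite_of_fg_of_finiteIndex [Group.FG G] (N : Subgroup G) [N.FiniteIndex]
    [IsMulCommutative N] (hN : ∀ a ∈ N, IsOfFinOrder a) : Finite G := by
  have : Finite N := CommGroup.finite_of_fg_isMulTorsion N fun a =>
    N.subtype_injective.isOfFinOrder_iff.1 (hN a a.2)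
  exact (finite_iff_finite_and_finiteIndex (H := N)).2 ⟨this, inferInstance⟩

theorem finite_of_finiteIndex_center [Group.FG G] [(center G).FiniteIndex] {X : Set G}
    (hX : closure X = ⊤) (hXfin : ∀ x ∈ X, IsOfFinOrder x) : Finite G :=
  finite_of_fg_of_finiteIndex (center G) fun a _ => isOfFinOrder_of_finiteIndex_center hX hXfin a

theorem finite_of_finite_map (f : G →* Q) (K : Subgroup G) [Group.FG K] [Finite (K.map f)]
    (hcomm : ∀ a ∈ f.ker, ∀ b ∈ f.ker, Commute a b) (htors : ∀ a ∈ f.ker, IsOfFinOrder a) :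
    Finite K := by
  let g := f.comp K.subtype
  have : Finite g.range := by rwa [MonoidHom.range_comp, range_subtype]
  have : IsMulCommutative g.ker :=
    .of_setLike_mul_comm fun a ha b hb => Subtype.ext (hcomm _ ha _ hb).eq
  exact finite_of_fg_of_finiteIndex g.ker fun a ha =>
    K.subtype_injective.isOfFinOrder_iff.1 (htors _ ha)

def torsionPart (A : Subgroup G) [IsMulCommutative A] : Subgroup G where
  carrier := {g | g ∈ A ∧ IsOfFinOrder g}
  one_mem' := ⟨one_mem A, IsOfFinOrder.one⟩
  mul_mem' ha hb := ⟨mul_mem ha.1 hb.1,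
    Commute.isOfFinOrder_mul (setLike_mul_comm ha.1 hb.1) ha.2 hb.2⟩
  inv_mem' ha := ⟨inv_mem ha.1, ha.2.inv⟩

instance normal_torsionPart (A : Subgroup G) [IsMulCommutative A] [hA : A.Normal] :
    (torsionPart A).Normal :=
  ⟨fun a ha g => ⟨hA.conj_mem a ha.1 g, (isConj_iff.2 ⟨g, rfl⟩).isOfFinOrder ha.2⟩⟩

theorem mk_eq_one_of_isOfFinOrder (A : Subgroup G) [IsMulCommutative A] [A.Normal] {a : G}
    (ha : a ∈ A) (hfin : IsOfFinOrder (a : G ⧸ torsionPart A)) : (a : G ⧸ torsionPart A) = 1 := by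
  obtain ⟨k, hk, hpow⟩ := isOfFinOrder_iff_pow_eq_one.1 hfin
  rw [← QuotientGroup.mk_pow, QuotientGroup.eq_one_iff] at hpow
  exact (QuotientGroup.eq_one_iff a).2 ⟨ha, hpow.2.of_pow hk.ne'⟩

theorem derivedSeries_quotient_derivedSeries (n : ℕ) :
    derivedSeries (G ⧸ derivedSeries G n) n = ⊥ := by
  rw [← map_derivedSeries_eq (QuotientGroup.mk'_surjective _), QuotientGroup.map_mk'_self]

end GroupTheory

namespace CommTree

open scoped commutatorElement

variable {G H : Type*} [Group G] [Group H]

def bracket (a b : G) : G := a⁻¹ * b⁻¹ * a * b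

theorem bracket_inv (a b : G) : (bracket a b)⁻¹ = bracket b a := by
  unfold bracket; group

theorem bracket_inv_inv (a b : G) : bracket a⁻¹ b⁻¹ = (a * b) * bracket a b * (a * b)⁻¹ := by
  unfold bracket; group

theorem bracket_inv_right (a b : G) : bracket a b⁻¹ = b * bracket b a * b⁻¹ := by
  unfold bracket; group

theorem map_bracket (φ : G →* H) (a b : G) : φ (bracket a b) = bracket (φ a) (φ b) := by
  simp [bracket]

theorem bracket_eq_one_iff {a b : G} : bracket a b = 1 ↔ Commute a b := by
  rw [show bracket a b = ⁅a⁻¹, b⁻¹⁆ by simp [bracket, commutatorElement_def],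
    commutatorElement_eq_one_iff_commute, Commute.inv_inv_iff]

theorem hall_witt (p q r : G) :
    (q⁻¹ * bracket (bracket p q⁻¹) r * q) * (r⁻¹ * bracket (bracket q r⁻¹) p * r) *
      (p⁻¹ * bracket (bracket r p⁻¹) q * p) = 1 := by
  unfold bracket; group

theorem commute_bracket_of_commute {p q r : G} (h₁ : Commute p (bracket q⁻¹ r⁻¹))
    (h₂ : Commute q (bracket r p⁻¹)) : Commute (bracket p q) r := by
  have hw := hall_witt p q⁻¹ r
  rw [inv_inv, bracket_eq_one_iff.2 h₁.symm, bracket_eq_one_iff.2 h₂.inv_left.symm] at hw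
  rw [← bracket_eq_one_iff]
  simpa using hw

theorem bracket_mem_iff_commute {J : Subgroup G} [J.Normal] {a b : G} :
    bracket a b ∈ J ↔ Commute (a : G ⧸ J) (b : G ⧸ J) := by
  rw [← QuotientGroup.eq_one_iff, ← QuotientGroup.mk'_apply, map_bracket, bracket_eq_one_iff]
  rfl

theorem bracket_mem_of_mem_right {N : Subgroup G} [N.Normal] (a : G) {b : G} (hb : b ∈ N) :
    bracket a b ∈ N := by
  rw [bracket_mem_iff_commute, (QuotientGroup.eq_one_iff b).2 hb]
  exact Commute.one_right _

theorem bracket_mem_of_mem_left {N : Subgroup G} [N.Normal] {a : G} (b : G) (ha : a ∈ N) :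
    bracket a b ∈ N := by
  rw [← bracket_inv, inv_mem_iff]
  exact bracket_mem_of_mem_right b ha

theorem bracket_mem_of_mem_closure {J : Subgroup G} [J.Normal] {X : Set G} {a : G}
    (h : ∀ c ∈ X, bracket a c ∈ J) {y : G} (hy : y ∈ closure X) : bracket a y ∈ J := by
  rw [bracket_mem_iff_commute]
  induction hy using closure_induction with
  | mem c hc => exact bracket_mem_iff_commute.1 (h c hc)
  | one => exact Commute.one_right _
  | mul x y _ _ hx hy => exact hx.mul_right hy
  | inv x _ hx => exact hx.inv_right

def values (v : CommTree) (G : Type*) [Group G] : Set G := {x | ∃ f : ℕ → G, v.eval f = x}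

theorem eval_congr : ∀ (v : CommTree) {f g : ℕ → G}, (∀ n < v.weight, f n = g n) →
    v.eval f = v.eval g
  | .leaf, _, _, h => h 0 (by simp [weight])
  | .node a b, _, _, h => by
    have ha := eval_congr a fun n hn => h n (by simp only [weight]; omega)
    have hb := eval_congr b fun n hn => h (n + a.weight) (by simp only [weight]; omega)
    simp only [eval, ha, hb]

theorem eval_node (a b : CommTree) (f : ℕ → G) :
    (node a b).eval f = bracket (a.eval f) (b.eval fun n => f (n + a.weight)) := rfl

theorem values_leaf : leaf.values G = Set.univ :=
  Set.eq_univ_of_forall fun x => ⟨fun _ => x, rfl⟩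

theorem bracket_mem_values_node {v₁ v₂ : CommTree} {s t : G} (hs : s ∈ v₁.values G)
    (ht : t ∈ v₂.values G) : bracket s t ∈ (node v₁ v₂).values G := by
  obtain ⟨f₁, rfl⟩ := hs
  obtain ⟨f₂, rfl⟩ := ht
  refine ⟨fun n => if n < v₁.weight then f₁ n else f₂ (n - v₁.weight), ?_⟩
  rw [eval_node]
  congr 1
  · exact eval_congr _ fun n hn => if_pos hn
  · exact eval_congr _ fun n _ => by simp

theorem mem_values_node {v₁ v₂ : CommTree} {x : G} :
    x ∈ (node v₁ v₂).values G ↔ ∃ s ∈ v₁.values G, ∃ t ∈ v₂.values G, bracket s t = x := by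
  refine ⟨?_, fun ⟨s, hs, t, ht, hx⟩ => hx ▸ bracket_mem_values_node hs ht⟩
  rintro ⟨f, rfl⟩
  exact ⟨_, ⟨f, rfl⟩, _, ⟨_, rfl⟩, rfl⟩

theorem map_eval (φ : G →* H) : ∀ (v : CommTree) (f : ℕ → G), φ (v.eval f) = v.eval (φ ∘ f)
  | .leaf, _ => rfl
  | .node a b, f => by
    simp only [eval_node, map_bracket, map_eval φ a, map_eval φ b]
    rfl

theorem image_values {φ : G →* H} (hφ : Function.Surjective φ) (v : CommTree) :
    φ '' v.values G = v.values H := by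
  refine Set.Subset.antisymm ?_ fun y ⟨f, hf⟩ => ?_
  · rintro _ ⟨x, ⟨f, rfl⟩, rfl⟩
    exact ⟨φ ∘ f, (map_eval φ v f).symm⟩
  · refine ⟨v.eval (Function.surjInv hφ ∘ f), ⟨_, rfl⟩, ?_⟩
    rw [map_eval, ← hf]
    exact eval_congr _ fun n _ => Function.surjInv_eq hφ (f n)

theorem isOfFinOrder_of_surjective {φ : G →* H} (hφ : Function.Surjective φ) {v : CommTree}
    (hfin : ∀ x ∈ v.values G, IsOfFinOrder x) : ∀ y ∈ v.values H, IsOfFinOrder y := by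
  rw [← image_values hφ]
  rintro _ ⟨x, hx, rfl⟩
  exact φ.isOfFinOrder (hfin x hx)

theorem conj_mem_values {v : CommTree} {x : G} (hx : x ∈ v.values G) (g : G) :
    g * x * g⁻¹ ∈ v.values G := by
  rw [← image_values (φ := (MulAut.conj g).toMonoidHom) (MulAut.conj g).surjective]
  exact ⟨x, hx, MulAut.conj_apply g x⟩

theorem coe_bracket {J : Subgroup G} [J.Normal] (a b : G) :
    ((bracket a b : G) : G ⧸ J) = bracket (a : G ⧸ J) (b : G ⧸ J) :=
  map_bracket (QuotientGroup.mk' J) a b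

theorem bracket_bracket_mem {J N₁ N₂ : Subgroup G} [J.Normal] [N₁.Normal] [N₂.Normal]
    {t₁ t₂ a : G} (h₁ : ∀ y ∈ N₂, bracket t₁ y ∈ J) (h₂ : ∀ y ∈ N₁, bracket t₂ y ∈ J)
    (ha₁ : bracket t₁ a ∈ N₁) (ha₂ : bracket t₂ a ∈ N₂) : bracket (bracket t₁ t₂) a ∈ J := by
  have hy₂ : bracket t₂⁻¹ a⁻¹ ∈ N₂ := by
    rw [bracket_inv_inv]; exact ‹N₂.Normal›.conj_mem _ ha₂ _
  have hy₁ : bracket a t₁⁻¹ ∈ N₁ := by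
    rw [bracket_inv_right]; exact ‹N₁.Normal›.conj_mem _ ha₁ _
  have c₁ := bracket_mem_iff_commute.1 (h₁ _ hy₂)
  have c₂ := bracket_mem_iff_commute.1 (h₂ _ hy₁)
  rw [coe_bracket] at c₁ c₂
  rw [bracket_mem_iff_commute, coe_bracket]
  exact commute_bracket_of_commute c₁ c₂

def valueClosureIn (v : CommTree) (A : Subgroup G) : Subgroup G := closure (v.values G ∩ A)

instance normal_valueClosureIn (v : CommTree) (A : Subgroup G) [hA : A.Normal] :
    (v.valueClosureIn A).Normal :=
  normal_closure_of_conj_mem fun x hx g => ⟨conj_mem_values hx.1 g, hA.conj_mem x hx.2 g⟩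

theorem bracket_mem_valueClosureIn {A : Subgroup G} [A.Normal] :
    ∀ (v : CommTree) {t a : G}, t ∈ v.values G → a ∈ A → bracket t a ∈ v.valueClosureIn A
  | .leaf, t, _, _, ha =>
    subset_closure ⟨values_leaf (G := G) ▸ trivial, bracket_mem_of_mem_right t ha⟩
  | .node v₁ v₂, _, _, ht, ha => by
    obtain ⟨t₁, ht₁, t₂, ht₂, rfl⟩ := mem_values_node.1 ht
    have hJ : (node v₁ v₂).values G ∩ A ⊆ (node v₁ v₂).valueClosureIn A := subset_closure
    refine bracket_bracket_mem (fun y hy => ?_) (fun y hy => ?_)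
      (bracket_mem_valueClosureIn v₁ ht₁ ha) (bracket_mem_valueClosureIn v₂ ht₂ ha)
    · refine bracket_mem_of_mem_closure (fun c hc => hJ ?_) hy
      exact ⟨bracket_mem_values_node ht₁ hc.1, bracket_mem_of_mem_right t₁ hc.2⟩
    · refine bracket_mem_of_mem_closure (fun c hc => ?_) hy
      rw [← bracket_inv, inv_mem_iff]
      exact hJ ⟨bracket_mem_values_node hc.1 ht₂, bracket_mem_of_mem_left t₂ hc.2⟩

theorem commute_of_mem_values {A : Subgroup G} [A.Normal]
    (htf : ∀ a ∈ A, IsOfFinOrder a → a = 1) {v : CommTree}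
    (hfin : ∀ x ∈ v.values G, IsOfFinOrder x) {x a : G} (hx : x ∈ v.values G) (ha : a ∈ A) :
    Commute x a := by
  have hbot : v.valueClosureIn A = ⊥ :=
    closure_eq_bot_iff.2 fun y hy => htf y hy.2 (hfin y hy.1)
  rw [← bracket_eq_one_iff, ← mem_bot, ← hbot]
  exact bracket_mem_valueClosureIn v hx ha

theorem finite_closure_of_finite_map {A : Subgroup G} [A.Normal]
    (htf : ∀ a ∈ A, IsOfFinOrder a → a = 1) {v : CommTree}
    (hfin : ∀ x ∈ v.values G, IsOfFinOrder x) {Y : Set G} [Finite Y] (hY : Y ⊆ v.values G)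
    [Finite ((closure Y).map (QuotientGroup.mk' A))] : Finite (closure Y) := by
  let K := closure Y
  let g := (QuotientGroup.mk' A).comp K.subtype
  have : Finite g.range := by rwa [MonoidHom.range_comp, range_subtype]
  have hKA : K ≤ centralizer A := (closure_le _).2 fun y hy =>
    mem_centralizer_iff.2 fun a ha => (commute_of_mem_values htf hfin (hY hy) ha).eq.symm
  have hcenter : g.ker ≤ center K := fun k hk => mem_center_iff.2 fun k' =>
    Subtype.ext (mem_centralizer_iff.1 (hKA k'.2) k ((QuotientGroup.eq_one_iff _).1 hk)).symm
  have : (center K).FiniteIndex := finiteIndex_of_le hcenter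
  exact finite_of_finiteIndex_center (closure_preimage_eq_top Y) fun x hx =>
    K.subtype_injective.isOfFinOrder_iff.1 (hfin _ (hY hx))

theorem finite_closure_of_derivedSeries_eq_bot (v : CommTree) (n : ℕ)
    (hG : derivedSeries G n = ⊥) (hfin : ∀ x ∈ v.values G, IsOfFinOrder x) {Y : Set G}
    [Finite Y] (hY : Y ⊆ v.values G) : Finite (closure Y) := by
  induction n generalizing G with
  | zero =>
    rw [derivedSeries_zero] at hG
    have : Subsingleton G := Subgroup.subsingleton_iff.1 (subsingleton_of_bot_eq_top hG.symm)
    infer_instance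
  | succ n ih =>
    let A := derivedSeries G n
    have : IsMulCommutative A := commutator_self_eq_bot_iff.1 hG
    let π := QuotientGroup.mk' (torsionPart A)
    have hπ : Function.Surjective π := QuotientGroup.mk'_surjective _
    let A₁ := derivedSeries (G ⧸ torsionPart A) n
    let φ := QuotientGroup.mk' A₁
    have hφ : Function.Surjective φ := QuotientGroup.mk'_surjective _
    have htf : ∀ a ∈ A₁, IsOfFinOrder a → a = 1 := by
      rw [← show A.map π = A₁ from map_derivedSeries_eq hπ n]
      rintro _ ⟨a, ha, rfl⟩
      exact mk_eq_one_of_isOfFinOrder A ha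
    have hfin₁ := isOfFinOrder_of_surjective hπ hfin
    have hY₁ : π '' Y ⊆ v.values _ := image_values hπ v ▸ Set.image_mono hY
    have : Finite ((closure (π '' Y)).map φ) := by
      rw [MonoidHom.map_closure]
      exact ih (derivedSeries_quotient_derivedSeries n) (isOfFinOrder_of_surjective hφ hfin₁)
        (image_values hφ v ▸ Set.image_mono hY₁)
    have : Finite ((closure Y).map π) := by
      rw [MonoidHom.map_closure]
      exact finite_closure_of_finite_map htf hfin₁ hY₁
    refine finite_of_finite_map π (closure Y) (fun a ha b hb => ?_) fun a ha => ?_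
    · rw [QuotientGroup.ker_mk'] at ha hb
      exact setLike_mul_comm ha.1 hb.1
    · rw [QuotientGroup.ker_mk'] at ha
      exact ha.2

end CommTree

/-- If G is soluble and every v-value has finite order, for a multilinear commutator
word v, then v(G) is locally finite. -/
theorem stmt_16 {G : Type*} [Group G] [Group.IsSolvable G] (v : CommTree)
    (hfin : ∀ x ∈ {x : G | ∃ f : ℕ → G, v.eval f = x}, IsOfFinOrder x) :
    ∀ H : Subgroup G, H ≤ Subgroup.closure {x : G | ∃ f : ℕ → G, v.eval f = x} →
      H.FG → Finite H := by
  intro H hle hH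
  obtain ⟨n, hn⟩ := Group.IsSolvable.solvable (G := G)
  obtain ⟨Y, hYv, hY, hHY⟩ := exists_finite_subset_of_fg_le_closure hH hle
  have := hY.to_subtype
  have := v.finite_closure_of_derivedSeries_eq_bot n hn hfin hYv
  exact Finite.of_injective (inclusion hHY) (inclusion_injective hHY)
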